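/- Let φ, ψ : ℝ → ℂ be continuous even functions such that |φ| and |ψ| are strictly increasing on (0,∞) and |φ(t)|/|ψ(t)| is non-increasing on (0,∞). Fix b > 0 and let φ_b and N(b) be as defined. Then for every finite Borel measure μ on ℝ with ∫|ψ|² dμ < ∞, one has √(∫ℝ |φ(t)|² dμ(t)) ≤ (|φ(b)|/|ψ(b)|)·√(∫ℝ |ψ(t)|² dμ(t)) + N(b)·√(μ(ℝ)). -/

import Mathlib

/-!
Pointwise, `‖φ t‖ ≤ c ‖ψ t‖ + N(b)` with `c = ‖φ b‖ / ‖ψ b‖`: for `|t| ≤ b` this is the triangle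
inequality applied to `φ t = φ_b t + (φ b / ψ b) ψ t`, and for `|t| > b` evenness reduces to
`t > b`, where the non-increasing ratio gives `‖φ t‖ ≤ c ‖ψ t‖`. Minkowski's inequality in
`L²(μ)` turns this into `‖φ‖₂ ≤ c ‖ψ‖₂ + N(b) ‖1‖₂`.
-/

open MeasureTheory

/-- The truncation `φ_b(t) = φ(t) − (φ(b)/ψ(b))·ψ(t)` for `|t| ≤ b`, `0` otherwise. -/
noncomputable def phib (φ ψ : ℝ → ℂ) (b : ℝ) : ℝ → ℂ :=
  fun t => if |t| ≤ b then φ t - (φ b / ψ b) * ψ t else 0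

/-- `N(b) = sup_{t ∈ ℝ} |φ_b(t)|`. -/
noncomputable def Nb (φ ψ : ℝ → ℂ) (b : ℝ) : ℝ :=
  ⨆ t : ℝ, ‖phib φ ψ b t‖

lemma Function.Even.apply_abs {α β : Type*} [AddGroup α] [LinearOrder α] {f : α → β}
    (hf : Function.Even f) (x : α) : f |x| = f x := by
  rcases abs_choice x with h | h <;> rw [h]
  exact hf x

lemma norm_pos_of_strictMonoOn_norm {E : Type*} [NormedAddCommGroup E] {f : ℝ → E}
    (hf : StrictMonoOn (fun t => ‖f t‖) (Set.Ioi 0)) {t : ℝ} (ht : 0 < t) : 0 < ‖f t‖ :=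
  (norm_nonneg (f (t / 2))).trans_lt <| hf (half_pos ht) ht (half_lt_self ht)

lemma norm_le_div_mul_norm_of_le_abs {E F : Type*} [NormedAddCommGroup E]
    [NormedAddCommGroup F] {φ : ℝ → E} {ψ : ℝ → F} (hφe : Function.Even φ)
    (hψe : Function.Even ψ) (hψpos : ∀ t, 0 < t → 0 < ‖ψ t‖)
    (hratio : AntitoneOn (fun t => ‖φ t‖ / ‖ψ t‖) (Set.Ioi 0)) {b t : ℝ} (hb : 0 < b)
    (hbt : b ≤ |t|) : ‖φ t‖ ≤ ‖φ b‖ / ‖ψ b‖ * ‖ψ t‖ := by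
  have ht : 0 < |t| := hb.trans_le hbt
  rw [← hφe.apply_abs t, ← hψe.apply_abs t, ← div_le_iff₀ (hψpos _ ht)]
  exact hratio hb ht hbt

section Truncation

variable {φ ψ : ℝ → ℂ}

lemma bddAbove_range_norm_phib (hφc : Continuous φ) (hψc : Continuous ψ) (b : ℝ) :
    BddAbove (Set.range fun t => ‖phib φ ψ b t‖) := by
  obtain ⟨M, hM⟩ := (isCompact_Icc (a := -b) (b := b)).exists_bound_of_continuousOn
    (hφc.sub (continuous_const.mul hψc)).continuousOn
  refine ⟨max M 0, Set.forall_mem_range.2 fun t => ?_⟩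
  unfold phib
  split_ifs with ht
  · exact le_max_of_le_left (hM t (abs_le.1 ht))
  · simp

lemma norm_phib_le_Nb (hφc : Continuous φ) (hψc : Continuous ψ) (b t : ℝ) :
    ‖phib φ ψ b t‖ ≤ Nb φ ψ b :=
  le_ciSup (bddAbove_range_norm_phib hφc hψc b) t

lemma Nb_nonneg (φ ψ : ℝ → ℂ) (b : ℝ) : 0 ≤ Nb φ ψ b :=
  Real.iSup_nonneg fun _ => norm_nonneg _

lemma norm_le_div_mul_norm_add_Nb (hφc : Continuous φ) (hψc : Continuous ψ)
    (hφe : Function.Even φ) (hψe : Function.Even ψ) (hψpos : ∀ t, 0 < t → 0 < ‖ψ t‖)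
    (hratio : AntitoneOn (fun t => ‖φ t‖ / ‖ψ t‖) (Set.Ioi 0)) {b : ℝ} (hb : 0 < b) (t : ℝ) :
    ‖φ t‖ ≤ ‖φ b‖ / ‖ψ b‖ * ‖ψ t‖ + Nb φ ψ b := by
  by_cases ht : |t| ≤ b
  · have hsplit : φ t = phib φ ψ b t + φ b / ψ b * ψ t := by simp [phib, ht]
    calc ‖φ t‖ ≤ ‖phib φ ψ b t‖ + ‖φ b / ψ b * ψ t‖ := hsplit ▸ norm_add_le _ _
      _ ≤ ‖φ b‖ / ‖ψ b‖ * ‖ψ t‖ + Nb φ ψ b := by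
        rw [norm_mul, norm_div, add_comm]
        gcongr
        exact norm_phib_le_Nb hφc hψc b t
  · calc ‖φ t‖ ≤ ‖φ b‖ / ‖ψ b‖ * ‖ψ t‖ :=
          norm_le_div_mul_norm_of_le_abs hφe hψe hψpos hratio hb (not_le.1 ht).le
      _ ≤ ‖φ b‖ / ‖ψ b‖ * ‖ψ t‖ + Nb φ ψ b := le_add_of_nonneg_right (Nb_nonneg φ ψ b)

end Truncation

namespace MeasureTheory

variable {α E F : Type*} [MeasurableSpace α] {μ : Measure α}
  [NormedAddCommGroup E] [NormedAddCommGroup F]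

lemma sqrt_integral_norm_sq_eq_lpNorm {f : α → E} (hf : AEStronglyMeasurable f μ) :
    Real.sqrt (∫ x, ‖f x‖ ^ 2 ∂μ) = lpNorm f 2 μ := by
  rw [lpNorm_eq_integral_norm_rpow_toReal two_ne_zero ENNReal.ofNat_ne_top hf,
    Real.sqrt_eq_rpow, ENNReal.toReal_ofNat, one_div]
  norm_cast

lemma sqrt_integral_norm_sq_le_of_norm_le [IsFiniteMeasure μ] {f : α → E} {g : α → F}
    (hf : AEStronglyMeasurable f μ) (hg : MemLp g 2 μ) {c N : ℝ} (hc : 0 ≤ c) (hN : 0 ≤ N)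
    (hfg : ∀ x, ‖f x‖ ≤ c * ‖g x‖ + N) :
    Real.sqrt (∫ x, ‖f x‖ ^ 2 ∂μ)
      ≤ c * Real.sqrt (∫ x, ‖g x‖ ^ 2 ∂μ) + N * Real.sqrt (μ.real Set.univ) := by
  have hcg : MemLp (fun x => c * ‖g x‖) 2 μ := hg.norm.const_mul c
  have hsmul : (fun x => c * ‖g x‖) = c • fun x => ‖g x‖ := rfl
  rw [sqrt_integral_norm_sq_eq_lpNorm hf, sqrt_integral_norm_sq_eq_lpNorm hg.1,
    Real.sqrt_eq_rpow]
  calc lpNorm f 2 μ ≤ lpNorm ((fun x => c * ‖g x‖) + fun _ => N) 2 μ :=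
        lpNorm_mono_real (hcg.add (memLp_const N)) hfg
    _ ≤ lpNorm (fun x => c * ‖g x‖) 2 μ + lpNorm (fun _ : α => N) 2 μ :=
        lpNorm_add_le hcg one_le_two
    _ = c * lpNorm g 2 μ + N * μ.real Set.univ ^ (1 / 2 : ℝ) := by
        rw [hsmul, lpNorm_const_smul, lpNorm_norm hg.1,
          lpNorm_const' two_ne_zero ENNReal.ofNat_ne_top, coe_nnnorm, Real.norm_of_nonneg hc,
          Real.norm_of_nonneg hN]
        norm_num

end MeasureTheory

theorem additive_hlp_integral_form_general
    (φ ψ : ℝ → ℂ) (hφc : Continuous φ) (hψc : Continuous ψ)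
    (hφe : ∀ t : ℝ, φ (-t) = φ t) (hψe : ∀ t : ℝ, ψ (-t) = ψ t)
    (hψm : StrictMonoOn (fun t => ‖ψ t‖) (Set.Ioi (0 : ℝ)))
    (hratio : AntitoneOn (fun t => ‖φ t‖ / ‖ψ t‖) (Set.Ioi (0 : ℝ)))
    (b : ℝ) (hb : 0 < b)
    (μ : Measure ℝ) [IsFiniteMeasure μ]
    (hψ2 : Integrable (fun t => ‖ψ t‖ ^ 2) μ) :
    Real.sqrt (∫ t, ‖φ t‖ ^ 2 ∂μ)
      ≤ (‖φ b‖ / ‖ψ b‖) * Real.sqrt (∫ t, ‖ψ t‖ ^ 2 ∂μ)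
        + Nb φ ψ b * Real.sqrt ((μ Set.univ).toReal) := by
  have hψL2 : MemLp ψ 2 μ :=
    (memLp_two_iff_integrable_sq_norm hψc.aestronglyMeasurable).2 hψ2
  have hpointwise := norm_le_div_mul_norm_add_Nb hφc hψc hφe hψe
    (fun _ => norm_pos_of_strictMonoOn_norm hψm) hratio hb
  exact sqrt_integral_norm_sq_le_of_norm_le hφc.aestronglyMeasurable hψL2 (by positivity)
    (Nb_nonneg φ ψ b) hpointwise

/-- **Additive Hardy–Littlewood–Pólya type inequality in integral form.** For
every finite Borel measure `μ` on `ℝ` with `∫ |ψ|² dμ < ∞`,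
`√(∫ |φ|² dμ) ≤ (|φ(b)|/|ψ(b)|)·√(∫ |ψ|² dμ) + N(b)·√(μ(ℝ))`. -/
theorem additive_hlp_integral_form
    (φ ψ : ℝ → ℂ) (hφc : Continuous φ) (hψc : Continuous ψ)
    (hφe : ∀ t : ℝ, φ (-t) = φ t) (hψe : ∀ t : ℝ, ψ (-t) = ψ t)
    (hφm : StrictMonoOn (fun t => ‖φ t‖) (Set.Ioi (0 : ℝ)))
    (hψm : StrictMonoOn (fun t => ‖ψ t‖) (Set.Ioi (0 : ℝ)))
    (hratio : AntitoneOn (fun t => ‖φ t‖ / ‖ψ t‖) (Set.Ioi (0 : ℝ)))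
    (b : ℝ) (hb : 0 < b)
    (μ : Measure ℝ) [IsFiniteMeasure μ]
    (hψ2 : Integrable (fun t => ‖ψ t‖ ^ 2) μ) :
    Real.sqrt (∫ t, ‖φ t‖ ^ 2 ∂μ)
      ≤ (‖φ b‖ / ‖ψ b‖) * Real.sqrt (∫ t, ‖ψ t‖ ^ 2 ∂μ)
        + Nb φ ψ b * Real.sqrt ((μ Set.univ).toReal) :=
  additive_hlp_integral_form_general φ ψ hφc hψc hφe hψe hψm hratio b hb μ hψ2
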